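/- Let P be the transition matrix of a block-structured Markov chain on state space S = S₁ ∪ S₂ (disjoint), where transitions between S₁ and S₂ are only possible through a single bottleneck state b ∈ S₁. Then for the successor representation M = (I − γP)^{-1} and any s ∈ S₁, s' ∈ S₂, the entry factorizes as M_{ss'} = E[γ^{T_b} | X_0 = s] · M_{bs'}, where T_b is the first hitting time of b. -/

import Mathlib

/-!
For `x ∈ S₁ \ {b}` the resolvent identity `M = 1 + γ P M` says that every column `M · y` with
`y ≠ x` is discounted-harmonic at `x`, and the bottleneck hypothesis keeps `P x ·` inside `S₁`.
So `M b b • M · s' - M b s' • M · b` solves the discounted Dirichlet problem on `S₁` with boundary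
`{b}` and zero boundary value; by the maximum principle for `γ P` (a strict contraction in the
sup norm) it vanishes on `S₁`. Dividing by `M b b ≥ 1` gives the factorization.
-/

open Finset Matrix

namespace Matrix

variable {ι : Type*} [Fintype ι] [DecidableEq ι] {P : Matrix ι ι ℝ} {γ : ℝ}

theorem mulVec_le_of_forall_le_of_mem_rowStochastic (hP : P ∈ rowStochastic ℝ ι) {v : ι → ℝ}
    {m : ℝ} (hv : ∀ j, v j ≤ m) (i : ι) : (P *ᵥ v) i ≤ m :=
  calc (P *ᵥ v) i = ∑ j, P i j * v j := rfl
    _ ≤ ∑ j, P i j * m := sum_le_sum fun j _ => mul_le_mul_of_nonneg_left (hv j) (hP.1 i j)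
    _ = m := by rw [← sum_mul, sum_row_of_mem_rowStochastic hP, one_mul]

theorem nonpos_of_forall_nonpos_or_le_smul_mulVec (hP : P ∈ rowStochastic ℝ ι) (hγ0 : 0 ≤ γ)
    (hγ1 : γ < 1) {v : ι → ℝ} (hv : ∀ i, v i ≤ 0 ∨ v i ≤ γ * (P *ᵥ v) i) (i : ι) : v i ≤ 0 := by
  have : Nonempty ι := ⟨i⟩
  obtain ⟨j, hj⟩ := Finite.exists_max v
  by_contra! hpos
  have hmax : 0 < v j := hpos.trans_le (hj i)
  have : v j ≤ γ * v j := ((hv j).resolve_left hmax.not_ge).trans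
    (mul_le_mul_of_nonneg_left (mulVec_le_of_forall_le_of_mem_rowStochastic hP hj j) hγ0)
  nlinarith

theorem eq_zero_of_forall_eq_zero_or_eq_smul_mulVec (hP : P ∈ rowStochastic ℝ ι) (hγ0 : 0 ≤ γ)
    (hγ1 : γ < 1) {v : ι → ℝ} (hv : ∀ i, v i = 0 ∨ v i = γ * (P *ᵥ v) i) : v = 0 := by
  have hle := nonpos_of_forall_nonpos_or_le_smul_mulVec hP hγ0 hγ1
    fun i => (hv i).imp le_of_eq le_of_eq
  have hge := nonpos_of_forall_nonpos_or_le_smul_mulVec hP hγ0 hγ1 (v := -v)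
    fun i => (hv i).imp (fun h => by simp [h]) (fun h => by simp [mulVec_neg, h])
  funext i
  exact le_antisymm (hle i) (neg_nonpos.1 (hge i))

theorem isUnit_one_sub_smul_of_mem_rowStochastic (hP : P ∈ rowStochastic ℝ ι) (hγ0 : 0 ≤ γ)
    (hγ1 : γ < 1) : IsUnit (1 - γ • P) := by
  refine (isUnit_iff_isUnit_det _).2 (isUnit_iff_ne_zero.2 fun hdet => ?_)
  obtain ⟨v, hv0, hv⟩ := exists_mulVec_eq_zero_iff.2 hdet
  refine hv0 (eq_zero_of_forall_eq_zero_or_eq_smul_mulVec hP hγ0 hγ1 fun i => Or.inr ?_)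
  have := congrFun hv i
  simp only [sub_mulVec, one_mulVec, smul_mulVec, Pi.sub_apply, Pi.smul_apply, smul_eq_mul,
    Pi.zero_apply] at this
  linarith

/-- The resolvent identity `(1 - γ P)⁻¹ = 1 + γ P (1 - γ P)⁻¹`, read column by column. -/
theorem inv_one_sub_smul_apply (hP : P ∈ rowStochastic ℝ ι) (hγ0 : 0 ≤ γ) (hγ1 : γ < 1)
    (x y : ι) :
    (1 - γ • P)⁻¹ x y = (1 : Matrix ι ι ℝ) x y + γ * (P *ᵥ fun z => (1 - γ • P)⁻¹ z y) x := by
  have hinv := mul_nonsing_inv _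
    ((isUnit_iff_isUnit_det _).1 (isUnit_one_sub_smul_of_mem_rowStochastic hP hγ0 hγ1))
  rw [sub_mul, one_mul, smul_mul_assoc, sub_eq_iff_eq_add] at hinv
  exact congrFun (congrFun hinv x) y

theorem inv_one_sub_smul_apply_of_ne (hP : P ∈ rowStochastic ℝ ι) (hγ0 : 0 ≤ γ) (hγ1 : γ < 1)
    {x y : ι} (hxy : x ≠ y) :
    (1 - γ • P)⁻¹ x y = γ * (P *ᵥ fun z => (1 - γ • P)⁻¹ z y) x := by
  rw [inv_one_sub_smul_apply hP hγ0 hγ1, one_apply_ne hxy, zero_add]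

theorem inv_one_sub_smul_nonneg (hP : P ∈ rowStochastic ℝ ι) (hγ0 : 0 ≤ γ) (hγ1 : γ < 1)
    (x y : ι) : 0 ≤ (1 - γ • P)⁻¹ x y := by
  have := nonpos_of_forall_nonpos_or_le_smul_mulVec hP hγ0 hγ1
    (v := -fun z => (1 - γ • P)⁻¹ z y) (fun i => Or.inr ?_) x
  · simpa using this
  rw [mulVec_neg, Pi.neg_apply, Pi.neg_apply, inv_one_sub_smul_apply hP hγ0 hγ1]
  have : (0 : ℝ) ≤ (1 : Matrix ι ι ℝ) i y := by rw [one_apply]; positivity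
  linarith

theorem one_le_inv_one_sub_smul_apply_self (hP : P ∈ rowStochastic ℝ ι) (hγ0 : 0 ≤ γ)
    (hγ1 : γ < 1) (x : ι) : 1 ≤ (1 - γ • P)⁻¹ x x := by
  rw [inv_one_sub_smul_apply hP hγ0 hγ1, one_apply_eq, le_add_iff_nonneg_right]
  exact mul_nonneg hγ0 (nonneg_mulVec_of_mem_rowStochastic hP
    (fun z => inv_one_sub_smul_nonneg hP hγ0 hγ1 z x) x)

/-- Uniqueness for the discounted Dirichlet problem on a set `S` that `P` cannot leave except
through the boundary `B`. -/
theorem eqOn_zero_of_eqOn_smul_mulVec (hP : P ∈ rowStochastic ℝ ι) (hγ0 : 0 ≤ γ) (hγ1 : γ < 1)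
    {S B : Set ι} (hS : ∀ x ∈ S \ B, ∀ z ∉ S, P x z = 0) {v : ι → ℝ}
    (hB : ∀ x ∈ B, v x = 0) (hv : ∀ x ∈ S \ B, v x = γ * (P *ᵥ v) x) : Set.EqOn v 0 S := by
  have hind : S.indicator v = 0 := by
    refine eq_zero_of_forall_eq_zero_or_eq_smul_mulVec hP hγ0 hγ1 fun x => ?_
    by_cases hxS : x ∈ S
    · rw [Set.indicator_of_mem hxS]
      by_cases hxB : x ∈ B
      · exact Or.inl (hB x hxB)
      refine Or.inr ((hv x ⟨hxS, hxB⟩).trans (congrArg (γ * ·) (sum_congr rfl fun z _ => ?_)))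
      show P x z * v z = P x z * S.indicator v z
      by_cases hzS : z ∈ S
      · rw [Set.indicator_of_mem hzS]
      · rw [hS x ⟨hxS, hxB⟩ z hzS, zero_mul, zero_mul]
    · exact Or.inl (Set.indicator_of_notMem hxS v)
  intro x hx
  simpa [Set.indicator_of_mem hx] using congrFun hind x

end Matrix

theorem sr_bottleneck_factorization_general (N : ℕ) (P : Matrix (Fin N) (Fin N) ℝ) (γ : ℝ)
    (hP_nonneg : ∀ i j, 0 ≤ P i j) (hP_row : ∀ i, ∑ j, P i j = 1)
    (hγ0 : 0 ≤ γ) (hγ1 : γ < 1)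
    (S₁ S₂ : Set (Fin N)) (hpart : S₁ ∪ S₂ = Set.univ) (hdisj : Disjoint S₁ S₂)
    (b : Fin N)
    (hbottleneck : ∀ x ∈ S₁ \ {b}, ∀ y ∈ S₂, P x y = 0)
    (M : Matrix (Fin N) (Fin N) ℝ) (hM : M = (1 - γ • P)⁻¹) :
    ∀ s ∈ S₁, ∀ s' ∈ S₂, M s s' = (M s b / M b b) * M b s' := by
  intro s hs s' hs'
  have hP : P ∈ rowStochastic ℝ (Fin N) := mem_rowStochastic_iff_sum.2 ⟨hP_nonneg, hP_row⟩
  have hcol : ∀ {x y}, x ≠ y → M x y = γ * (P *ᵥ fun z => M z y) x :=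
    hM ▸ inv_one_sub_smul_apply_of_ne hP hγ0 hγ1
  have hMbb : M b b ≠ 0 :=
    (hM ▸ one_le_inv_one_sub_smul_apply_self hP hγ0 hγ1 b).trans_lt' one_pos |>.ne'
  have hconfined : ∀ x ∈ S₁ \ {b}, ∀ z ∉ S₁, P x z = 0 := fun x hx z hz =>
    hbottleneck x hx z ((hpart ▸ Set.mem_univ z).resolve_left hz)
  have hharm : ∀ x ∈ S₁ \ {b}, M b b * M x s' - M b s' * M x b =
      γ * (P *ᵥ (M b b • (fun z => M z s') - M b s' • fun z => M z b)) x := by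
    intro x hx
    have hxs' : x ≠ s' := fun h => Set.disjoint_left.1 hdisj hx.1 (h ▸ hs')
    rw [hcol hxs', hcol hx.2, mulVec_sub, mulVec_smul, mulVec_smul]
    simp only [Pi.sub_apply, Pi.smul_apply, smul_eq_mul]
    ring
  have hvanish := eqOn_zero_of_eqOn_smul_mulVec hP hγ0 hγ1 hconfined
    (v := M b b • (fun z => M z s') - M b s' • fun z => M z b)
    (fun x hx => by simp [Set.mem_singleton_iff.1 hx, mul_comm]) hharm hs
  simp only [Pi.sub_apply, Pi.smul_apply, smul_eq_mul, Pi.zero_apply] at hvanish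
  field_simp
  linarith

/-- Bottleneck factorization of the successor representation.
`S = S₁ ∪ S₂` is a partition of the state space, transitions from `S₁` into
`S₂` are only possible through the bottleneck `b ∈ S₁` (i.e. `P x y = 0`
whenever `x ∈ S₁ \ {b}` and `y ∈ S₂`). Then for `M = (I − γP)⁻¹` and any
`s ∈ S₁`, `s' ∈ S₂`, the entry factorizes through the bottleneck:
`M_{ss'} = E[γ^{T_b} | X_0 = s] · M_{bs'}`, where by the first-passage
identity `E[γ^{T_b} | X_0 = s] = M_{sb} / M_{bb}` (`T_b` the first hitting
time of `b`). -/
theorem sr_bottleneck_factorization (N : ℕ) (P : Matrix (Fin N) (Fin N) ℝ) (γ : ℝ)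
    (hP_nonneg : ∀ i j, 0 ≤ P i j) (hP_row : ∀ i, ∑ j, P i j = 1)
    (hγ0 : 0 ≤ γ) (hγ1 : γ < 1)
    (S₁ S₂ : Set (Fin N)) (hpart : S₁ ∪ S₂ = Set.univ) (hdisj : Disjoint S₁ S₂)
    (b : Fin N) (hb : b ∈ S₁)
    (hbottleneck : ∀ x ∈ S₁ \ {b}, ∀ y ∈ S₂, P x y = 0)
    (M : Matrix (Fin N) (Fin N) ℝ) (hM : M = (1 - γ • P)⁻¹) :
    ∀ s ∈ S₁, ∀ s' ∈ S₂, M s s' = (M s b / M b b) * M b s' :=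
  sr_bottleneck_factorization_general N P γ hP_nonneg hP_row hγ0 hγ1 S₁ S₂ hpart hdisj b hbottleneck
    M hM
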